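/- arXiv:math/0608736 — 2 statements merged into one kernel-verified Lean document; each statement's English description precedes it below -/
import Mathlib

section
/- Let S be a control semigroup and let X be a metric space with X = A ∪ B, where A and B carry the induced metric. Then asdim_S X = max{asdim_S A, asdim_S B} (as elements of ℕ ∪ {∞}). -/
open Filter Set Metric Topology
open scoped NNReal ENNReal

/-- A large-scale (asymptotic) dim-control function: continuous, increasing,
eventually at least the identity, tending to infinity. -/
def IsLSControl (f : ℝ≥0 → ℝ≥0) : Prop :=
  Continuous f ∧ Monotone f ∧ (∀ᶠ x in atTop, x ≤ f x) ∧ Tendsto f atTop atTop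

/-- Asymptotically linear: coincides with a linear function on a neighborhood of infinity. -/
def IsAsympLinear (f : ℝ≥0 → ℝ≥0) : Prop :=
  ∃ a b : ℝ≥0, ∀ᶠ x in atTop, f x = a * x + b

/-- A (large-scale) control semigroup. -/
def IsControlSemigroup (S : Set (ℝ≥0 → ℝ≥0)) : Prop :=
  (∀ f ∈ S, IsLSControl f) ∧
  (∀ f, IsLSControl f → IsAsympLinear f → f ∈ S) ∧
  (∀ f ∈ S, ∀ g ∈ S, f ∘ g ∈ S)

/-- A family of subsets is `s`-disjoint if distinct members are at distance `> s`. -/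
def SDisjoint {X : Type*} [MetricSpace X] (s : ℝ≥0) (𝒰 : Set (Set X)) : Prop :=
  ∀ U ∈ 𝒰, ∀ V ∈ 𝒰, U ≠ V → ∀ x ∈ U, ∀ y ∈ V, (s : ℝ) < dist x y

/-- A family of subsets is `D`-bounded if each member has diameter at most `D`. -/
def BoundedBy {X : Type*} [MetricSpace X] (D : ℝ≥0) (𝒰 : Set (Set X)) : Prop :=
  ∀ U ∈ 𝒰, EMetric.diam U ≤ (D : ℝ≥0∞)

/-- `asdim_S X ≤ n`. -/
def ASDimLE (S : Set (ℝ≥0 → ℝ≥0)) (X : Type*) [MetricSpace X] (n : ℕ) : Prop :=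
  ∃ f ∈ S, ∃ s₀ : ℝ≥0, ∀ s : ℝ≥0, s₀ ≤ s →
    ∃ 𝒰 : Fin (n + 1) → Set (Set X),
      (⋃ i, ⋃₀ 𝒰 i) = univ ∧ ∀ i, SDisjoint s (𝒰 i) ∧ BoundedBy (f s) (𝒰 i)

/-- The `S`-controlled asymptotic dimension, as an element of `ℕ∞`. -/
noncomputable def ASDim (S : Set (ℝ≥0 → ℝ≥0)) (X : Type*) [MetricSpace X] : ℕ∞ :=
  sInf {k : ℕ∞ | ∃ n : ℕ, k = n ∧ ASDimLE S X n}

/-- `S₁ ⪯ S₂` : `S₂` is finer than `S₁`. -/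
def Preceq (S₁ S₂ : Set (ℝ≥0 → ℝ≥0)) : Prop :=
  ∀ f ∈ S₂, ∃ g ∈ S₁, ∀ᶠ x in atTop, f x ≤ g x

/-!
Cover `A` at scale `t = 2s + r` and `B` at scale `s` with families whose members have
diameter `≤ r`, and merge colour by colour: each piece of `B` that comes within `s`
of a piece of `A` is glued onto it. Since pieces of `A` of the same colour are more than `2s + r`
apart, a piece of `B` comes that close to at most one of them, so the glued sets stay
`s`-disjoint, and their diameters grow only by `2s + 2r`. With `r = f_B(s)` the new control
function is dominated by `3 f_A(3 f_B(s))`, which lies in `S`.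
-/

namespace IsControlSemigroup

variable {S : Set (ℝ≥0 → ℝ≥0)}

lemma const_mul_mem (hS : IsControlSemigroup S) {a : ℝ≥0} (ha : 1 ≤ a) :
    (a * ·) ∈ S := by
  have hle : ∀ x : ℝ≥0, x ≤ a * x := fun x => le_mul_of_one_le_left zero_le ha
  refine hS.2.1 _ ⟨by fun_prop, fun x y hxy => mul_le_mul_right hxy a,
    Eventually.of_forall hle, tendsto_atTop_mono hle tendsto_id⟩ ⟨a, 0, ?_⟩
  simp

end IsControlSemigroup

section Families

variable {X Y : Type*} [MetricSpace X] [MetricSpace Y] {s D : ℝ≥0} {𝒰 : Set (Set X)}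

lemma boundedBy_iff_dist_le :
    BoundedBy D 𝒰 ↔ ∀ U ∈ 𝒰, ∀ x ∈ U, ∀ y ∈ U, dist x y ≤ D :=
  forall₂_congr fun _ _ => ediam_le_iff.trans <|
    forall₂_congr fun _ _ => forall₂_congr fun _ _ => edist_le_coe.trans dist_le_coe.symm

lemma BoundedBy.mono {D' : ℝ≥0} (h : BoundedBy D 𝒰) (hD : D ≤ D') : BoundedBy D' 𝒰 :=
  fun U hU => (h U hU).trans (by exact_mod_cast hD)

lemma SDisjoint.union {ℬ : Set (Set X)} (h𝒰 : SDisjoint s 𝒰) (hℬ : SDisjoint s ℬ)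
    (hcross : ∀ U ∈ 𝒰, ∀ V ∈ ℬ, ∀ x ∈ U, ∀ y ∈ V, (s : ℝ) < dist x y) :
    SDisjoint s (𝒰 ∪ ℬ) := by
  rintro U (hU | hU) V (hV | hV) hUV x hx y hy
  · exact h𝒰 U hU V hV hUV x hx y hy
  · exact hcross U hU V hV x hx y hy
  · exact dist_comm x y ▸ hcross V hV U hU y hy x hx
  · exact hℬ U hU V hV hUV x hx y hy

lemma SDisjoint.image {f : Y → X} (hf : Isometry f) {𝒰 : Set (Set Y)} (h : SDisjoint s 𝒰) :
    SDisjoint s ((f '' ·) '' 𝒰) := by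
  rintro _ ⟨U, hU, rfl⟩ _ ⟨V, hV, rfl⟩ hUV _ ⟨x, hx, rfl⟩ _ ⟨y, hy, rfl⟩
  rw [hf.dist_eq]
  exact h U hU V hV (fun h => hUV (h ▸ rfl)) x hx y hy

lemma SDisjoint.preimage {f : Y → X} (hf : Isometry f) (h : SDisjoint s 𝒰) :
    SDisjoint s ((f ⁻¹' ·) '' 𝒰) := by
  rintro _ ⟨U, hU, rfl⟩ _ ⟨V, hV, rfl⟩ hUV x hx y hy
  rw [← hf.dist_eq]
  exact h U hU V hV (fun h => hUV (h ▸ rfl)) _ hx _ hy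

lemma BoundedBy.image {f : Y → X} (hf : Isometry f) {𝒰 : Set (Set Y)} (h : BoundedBy D 𝒰) :
    BoundedBy D ((f '' ·) '' 𝒰) := by
  rintro _ ⟨U, hU, rfl⟩
  exact (hf.ediam_image U).trans_le (h U hU)

lemma BoundedBy.preimage {f : Y → X} (hf : Isometry f) (h : BoundedBy D 𝒰) :
    BoundedBy D ((f ⁻¹' ·) '' 𝒰) := by
  rintro _ ⟨U, hU, rfl⟩
  calc Metric.ediam (f ⁻¹' U) = Metric.ediam (f '' (f ⁻¹' U)) := (hf.ediam_image _).symm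
    _ ≤ Metric.ediam U := ediam_mono (image_preimage_subset f U)
    _ ≤ D := h U hU

end Families

section Saturation

variable {X : Type*} [MetricSpace X] {s t r D : ℝ≥0} {𝒰 𝒱 : Set (Set X)}

def Touches (s : ℝ≥0) (U V : Set X) : Prop :=
  ∃ x ∈ U, ∃ y ∈ V, dist x y ≤ s

def saturation (s : ℝ≥0) (𝒱 : Set (Set X)) (U : Set X) : Set X :=
  U ∪ ⋃₀ {V ∈ 𝒱 | Touches s U V}

def saturate (s : ℝ≥0) (𝒰 𝒱 : Set (Set X)) : Set (Set X) :=
  saturation s 𝒱 '' 𝒰 ∪ {V ∈ 𝒱 | ∀ U ∈ 𝒰, ¬ Touches s U V}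

lemma sUnion_union_subset_sUnion_saturate :
    ⋃₀ 𝒰 ∪ ⋃₀ 𝒱 ⊆ ⋃₀ saturate s 𝒰 𝒱 := by
  rintro x (⟨U, hU, hx⟩ | ⟨V, hV, hx⟩)
  · exact ⟨_, Or.inl ⟨U, hU, rfl⟩, Or.inl hx⟩
  · by_cases hT : ∃ U ∈ 𝒰, Touches s U V
    · obtain ⟨U, hU, hUV⟩ := hT
      exact ⟨_, Or.inl ⟨U, hU, rfl⟩, Or.inr ⟨V, ⟨hV, hUV⟩, hx⟩⟩
    · push Not at hT
      exact ⟨V, Or.inr ⟨hV, hT⟩, hx⟩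

lemma exists_dist_le_of_mem_saturation (h𝒱 : BoundedBy r 𝒱) {U : Set X} {y : X}
    (hy : y ∈ saturation s 𝒱 U) : ∃ x ∈ U, dist y x ≤ r + s := by
  rcases hy with hy | ⟨V, ⟨hV, p, hp, q, hq, hpq⟩, hy⟩
  · exact ⟨y, hy, by simp only [dist_self]; positivity⟩
  · refine ⟨p, hp, ?_⟩
    calc dist y p ≤ dist y q + dist q p := dist_triangle y q p
      _ ≤ r + s := by
        gcongr
        · exact boundedBy_iff_dist_le.1 h𝒱 V hV y hy q hq
        · rwa [dist_comm]

lemma Touches.eq_of_touches (h𝒰 : SDisjoint t 𝒰) (h𝒱 : BoundedBy r 𝒱) (hst : 2 * s + r ≤ t)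
    {U U' V : Set X} (hU : U ∈ 𝒰) (hU' : U' ∈ 𝒰) (hV : V ∈ 𝒱)
    (h : Touches s U V) (h' : Touches s U' V) : U = U' := by
  by_contra hne
  obtain ⟨x, hx, y, hy, hxy⟩ := h
  obtain ⟨x', hx', y', hy', hxy'⟩ := h'
  have hyy' := boundedBy_iff_dist_le.1 h𝒱 V hV y hy y' hy'
  have hst' : 2 * (s : ℝ) + r ≤ t := by exact_mod_cast hst
  have := h𝒰 U hU U' hU' hne x hx x' hx'
  linarith [dist_triangle4 x y y' x', dist_comm x' y']

lemma eq_of_mem_of_mem_saturation (h𝒰 : SDisjoint t 𝒰) (h𝒱 : BoundedBy r 𝒱)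
    (hst : 2 * s + r ≤ t) {U U' : Set X} (hU : U ∈ 𝒰) (hU' : U' ∈ 𝒰) {x y : X} (hx : x ∈ U)
    (hy : y ∈ saturation s 𝒱 U') (hxy : dist x y ≤ s) : U = U' := by
  rcases hy with hy | ⟨V, ⟨hV, hU'V⟩, hy⟩
  · by_contra hne
    have hst' : 2 * (s : ℝ) + r ≤ t := by exact_mod_cast hst
    linarith [h𝒰 U hU U' hU' hne x hx y hy, s.coe_nonneg, r.coe_nonneg]
  · exact Touches.eq_of_touches h𝒰 h𝒱 hst hU hU' hV ⟨x, hx, y, hy, hxy⟩ hU'V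

lemma eq_of_mem_saturation_of_mem_saturation (h𝒰 : SDisjoint t 𝒰) (h𝒱 : SDisjoint s 𝒱)
    (h𝒱r : BoundedBy r 𝒱) (hst : 2 * s + r ≤ t) {U U' : Set X} (hU : U ∈ 𝒰) (hU' : U' ∈ 𝒰)
    {x y : X} (hx : x ∈ saturation s 𝒱 U) (hy : y ∈ saturation s 𝒱 U') (hxy : dist x y ≤ s) :
    U = U' := by
  rcases hx with hx | ⟨V, ⟨hV, hUV⟩, hx⟩
  · exact eq_of_mem_of_mem_saturation h𝒰 h𝒱r hst hU hU' hx hy hxy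
  rcases hy with hy | ⟨V', ⟨hV', hU'V'⟩, hy⟩
  · exact (eq_of_mem_of_mem_saturation h𝒰 h𝒱r hst hU' hU hy (Or.inr ⟨V, ⟨hV, hUV⟩, hx⟩)
      (dist_comm x y ▸ hxy)).symm
  obtain rfl : V = V' := by
    by_contra hne
    exact (h𝒱 V hV V' hV' hne x hx y hy).not_ge hxy
  exact Touches.eq_of_touches h𝒰 h𝒱r hst hU hU' hV hUV hU'V'

lemma SDisjoint.saturate (h𝒰 : SDisjoint t 𝒰) (h𝒱 : SDisjoint s 𝒱) (h𝒱r : BoundedBy r 𝒱)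
    (hst : 2 * s + r ≤ t) : SDisjoint s (saturate s 𝒰 𝒱) := by
  refine SDisjoint.union ?_ (fun V hV V' hV' hne => h𝒱 V hV.1 V' hV'.1 hne) ?_
  · rintro _ ⟨U, hU, rfl⟩ _ ⟨U', hU', rfl⟩ hne x hx y hy
    by_contra! hxy
    exact hne (congrArg _ (eq_of_mem_saturation_of_mem_saturation h𝒰 h𝒱 h𝒱r hst hU hU' hx hy hxy))
  · rintro _ ⟨U, hU, rfl⟩ V ⟨hV, hfar⟩ x hx y hy
    by_contra! hxy
    rcases hx with hx | ⟨V', ⟨hV', hUV'⟩, hx⟩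
    · exact hfar U hU ⟨x, hx, y, hy, hxy⟩
    · have hne : V' ≠ V := by rintro rfl; exact hfar U hU hUV'
      exact (h𝒱 V' hV' V hV hne x hx y hy).not_ge hxy

lemma BoundedBy.saturate (h𝒰 : BoundedBy D 𝒰) (h𝒱 : BoundedBy r 𝒱) :
    BoundedBy (D + 2 * s + 2 * r) (saturate s 𝒰 𝒱) := by
  rw [boundedBy_iff_dist_le]
  rintro _ (⟨U, hU, rfl⟩ | ⟨hV, -⟩) x hx y hy
  · obtain ⟨x', hx', hxx'⟩ := exists_dist_le_of_mem_saturation h𝒱 hx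
    obtain ⟨y', hy', hyy'⟩ := exists_dist_le_of_mem_saturation h𝒱 hy
    have := boundedBy_iff_dist_le.1 h𝒰 U hU x' hx' y' hy'
    push_cast
    linarith [dist_triangle4 x x' y' y, dist_comm y' y]
  · have := boundedBy_iff_dist_le.1 h𝒱 _ hV x hx y hy
    push_cast
    linarith [D.coe_nonneg, s.coe_nonneg, r.coe_nonneg]

end Saturation

section ASDim

variable {S : Set (ℝ≥0 → ℝ≥0)} {X Y : Type*} [MetricSpace X] [MetricSpace Y] {n : ℕ}

lemma asDimLE_iff_eventually : ASDimLE S X n ↔ ∃ f ∈ S, ∀ᶠ s in atTop,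
    ∃ 𝒰 : Fin (n + 1) → Set (Set X),
      (⋃ i, ⋃₀ 𝒰 i) = univ ∧ ∀ i, SDisjoint s (𝒰 i) ∧ BoundedBy (f s) (𝒰 i) := by
  simp only [ASDimLE, eventually_atTop]

lemma ASDimLE.mono {m : ℕ} (hnm : n ≤ m) (h : ASDimLE S X n) : ASDimLE S X m := by
  obtain ⟨f, hf, s₀, h⟩ := h
  refine ⟨f, hf, s₀, fun s hs => ?_⟩
  obtain ⟨𝒰, hcov, h𝒰⟩ := h s hs
  refine ⟨fun j => if hj : (j : ℕ) < n + 1 then 𝒰 ⟨j, hj⟩ else ∅, ?_, fun j => ?_⟩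
  · refine eq_univ_of_subset (iUnion_subset fun i => ?_) hcov
    exact subset_iUnion_of_subset (Fin.castLE (by omega) i) (by simp [i.2])
  · dsimp only
    split_ifs
    · exact h𝒰 _
    · simp [SDisjoint, BoundedBy]

lemma ASDimLE.of_isometry {f : Y → X} (hf : Isometry f) (h : ASDimLE S X n) :
    ASDimLE S Y n := by
  obtain ⟨g, hg, s₀, h⟩ := h
  refine ⟨g, hg, s₀, fun s hs => ?_⟩
  obtain ⟨𝒰, hcov, h𝒰⟩ := h s hs
  refine ⟨fun i => (f ⁻¹' ·) '' 𝒰 i, ?_, fun i => ⟨(h𝒰 i).1.preimage hf, (h𝒰 i).2.preimage hf⟩⟩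
  simp only [sUnion_image, ← sUnion_eq_biUnion, ← preimage_iUnion, hcov,
    preimage_univ]

lemma ASDimLE.of_union (hS : IsControlSemigroup S) {A B : Set X} (hAB : A ∪ B = univ)
    (hA : ASDimLE S A n) (hB : ASDimLE S B n) : ASDimLE S X n := by
  obtain ⟨fA, hfA, hA⟩ := asDimLE_iff_eventually.1 hA
  obtain ⟨fB, hfB, hB⟩ := asDimLE_iff_eventually.1 hB
  obtain ⟨-, hfA_mono, hfA_ge, -⟩ := hS.1 fA hfA
  obtain ⟨-, -, hfB_ge, hfB_tendsto⟩ := hS.1 fB hfB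
  have h3 := hS.const_mul_mem (a := 3) (by norm_num)
  refine asDimLE_iff_eventually.2 ⟨(3 * ·) ∘ fA ∘ (3 * ·) ∘ fB,
    hS.2.2 _ h3 _ (hS.2.2 _ hfA _ (hS.2.2 _ h3 _ hfB)), ?_⟩
  have h3fB : Tendsto (fun s => 3 * fB s) atTop atTop :=
    tendsto_atTop_mono (fun s => le_mul_of_one_le_left zero_le (by norm_num)) hfB_tendsto
  have ht : Tendsto (fun s => 2 * s + fB s) atTop atTop :=
    tendsto_atTop_mono (fun s => le_add_self) hfB_tendsto
  filter_upwards [ht.eventually hA, hB, hfB_ge, h3fB.eventually hfA_ge]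
    with s ⟨𝒰, h𝒰cov, h𝒰⟩ ⟨𝒱, h𝒱cov, h𝒱⟩ hsr hr
  set r := fB s
  have hbound : fA (2 * s + r) + 2 * s + 2 * r ≤ 3 * fA (3 * r) := by
    have : fA (2 * s + r) ≤ fA (3 * r) := hfA_mono (by linear_combination 2 * hsr)
    linear_combination this + 2 * hsr + 2 * hr + 2 * (zero_le : 0 ≤ r)
  refine ⟨fun i => saturate s ((Subtype.val '' ·) '' 𝒰 i) ((Subtype.val '' ·) '' 𝒱 i), ?_,
    fun i => ⟨?_, ?_⟩⟩
  · refine eq_univ_of_subset (iUnion_mono fun i => sUnion_union_subset_sUnion_saturate) ?_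
    simp only [iUnion_union_distrib, ← image_sUnion, ← image_iUnion, h𝒰cov, h𝒱cov,
      image_univ, Subtype.range_coe, hAB]
  · exact ((h𝒰 i).1.image isometry_subtype_coe).saturate ((h𝒱 i).1.image isometry_subtype_coe)
      ((h𝒱 i).2.image isometry_subtype_coe) le_rfl
  · exact (((h𝒰 i).2.image isometry_subtype_coe).saturate
      ((h𝒱 i).2.image isometry_subtype_coe)).mono hbound

lemma asDim_le_iff : ASDim S X ≤ n ↔ ASDimLE S X n := by
  refine ⟨fun h => ?_, fun h => sInf_le ⟨n, rfl, h⟩⟩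
  obtain ⟨m, hm, hmX⟩ : sInf {k : ℕ∞ | ∃ m : ℕ, k = m ∧ ASDimLE S X m} ∈
      {k : ℕ∞ | ∃ m : ℕ, k = m ∧ ASDimLE S X m} := by
    refine csInf_mem (nonempty_iff_ne_empty.2 fun hempty => ?_)
    rw [ASDim, hempty, sInf_empty] at h
    exact ENat.top_ne_natCast n (top_le_iff.1 h).symm
  rw [ASDim, hm] at h
  exact hmX.mono (by exact_mod_cast h)

lemma asDim_le_of_isometry {f : Y → X} (hf : Isometry f) : ASDim S Y ≤ ASDim S X :=
  sInf_le_sInf fun _ ⟨m, hk, hm⟩ => ⟨m, hk, hm.of_isometry hf⟩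

end ASDim

/-- Finite union theorem: if `X = A ∪ B` (with the induced metrics on `A` and `B`),
then `asdim_S X = max (asdim_S A) (asdim_S B)`. -/
theorem asdim_union (S : Set (ℝ≥0 → ℝ≥0)) (hS : IsControlSemigroup S)
    (X : Type*) [MetricSpace X] (A B : Set X) (hAB : A ∪ B = univ) :
    ASDim S X = max (ASDim S A) (ASDim S B) := by
  refine le_antisymm ?_ (max_le (asDim_le_of_isometry isometry_subtype_coe)
    (asDim_le_of_isometry isometry_subtype_coe))
  induction h : max (ASDim S A) (ASDim S B) using ENat.recTopCoe with
  | top => exact le_top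
  | coe n =>
    have hA : ASDim S A ≤ n := (le_max_left _ _).trans h.le
    have hB : ASDim S B ≤ n := (le_max_right _ _).trans h.le
    exact asDim_le_iff.2 ((asDim_le_iff.1 hA).of_union hS hAB (asDim_le_iff.1 hB))
end

section
/- Let X be a metric space, S̄ a global control semigroup, and n ∈ ℕ. Then M-dim_S̄ X ≤ n if and only if there exists f ∈ S̄ such that for all sufficiently large s > 0 there is a cover of X equal to a union of n+1 families U₁,…,U_{n+1}, each family being s-disjoint and f(s)-bounded. -/
open Filter Set Metric Topology
open scoped NNReal ENNReal

/-- A small-scale dim-control function. -/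
def IsSSControl (f : ℝ≥0 → ℝ≥0) : Prop :=
  Continuous f ∧ Monotone f ∧ f 0 = 0 ∧ ∀ᶠ x in 𝓝[>] (0 : ℝ≥0), x ≤ f x

/-- Coincides with a linear function on a neighborhood of `0`. -/
def IsLinearNearZero (f : ℝ≥0 → ℝ≥0) : Prop :=
  ∃ a b : ℝ≥0, ∀ᶠ x in 𝓝 (0 : ℝ≥0), f x = a * x + b

/-- A small-scale control semigroup. -/
def IsSSControlSemigroup (ξ : Set (ℝ≥0 → ℝ≥0)) : Prop :=
  (∀ f ∈ ξ, IsSSControl f) ∧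
  (∀ f, IsSSControl f → IsLinearNearZero f → f ∈ ξ) ∧
  (∀ f ∈ ξ, ∀ g ∈ ξ, f ∘ g ∈ ξ)

/-- A global dim-control function. -/
def IsGlobalControl (f : ℝ≥0 → ℝ≥0) : Prop :=
  Continuous f ∧ Monotone f ∧ f 0 = 0 ∧ Tendsto f atTop atTop ∧
    (∀ᶠ x in 𝓝[>] (0 : ℝ≥0), x ≤ f x) ∧ (∀ᶠ x in atTop, x ≤ f x)

/-- A global control semigroup. -/
def IsGlobalControlSemigroup (S : Set (ℝ≥0 → ℝ≥0)) : Prop :=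
  (∀ f ∈ S, IsGlobalControl f) ∧
  (∀ f, IsGlobalControl f → IsLinearNearZero f → IsAsympLinear f → f ∈ S) ∧
  (∀ f ∈ S, ∀ g ∈ S, f ∘ g ∈ S)

/-- `smdim_ξ X ≤ n`. -/
def SMDimLE (ξ : Set (ℝ≥0 → ℝ≥0)) (X : Type*) [MetricSpace X] (n : ℕ) : Prop :=
  ∃ f ∈ ξ, ∃ s₀ : ℝ≥0, 0 < s₀ ∧ ∀ s : ℝ≥0, 0 < s → s ≤ s₀ →
    ∃ 𝒰 : Fin (n + 1) → Set (Set X),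
      (⋃ i, ⋃₀ 𝒰 i) = univ ∧ ∀ i, SDisjoint s (𝒰 i) ∧ BoundedBy (f s) (𝒰 i)

/-- The `ξ`-controlled small-scale dimension. -/
noncomputable def SMDim (ξ : Set (ℝ≥0 → ℝ≥0)) (X : Type*) [MetricSpace X] : ℕ∞ :=
  sInf {k : ℕ∞ | ∃ n : ℕ, k = n ∧ SMDimLE ξ X n}

/-- `dim_S̄ X ≤ n` (global dimension). -/
def GDimLE (S : Set (ℝ≥0 → ℝ≥0)) (X : Type*) [MetricSpace X] (n : ℕ) : Prop :=
  ∃ f ∈ S, ∀ s : ℝ≥0, 0 < s →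
    ∃ 𝒰 : Fin (n + 1) → Set (Set X),
      (⋃ i, ⋃₀ 𝒰 i) = univ ∧ ∀ i, SDisjoint s (𝒰 i) ∧ BoundedBy (f s) (𝒰 i)

/-- The `S̄`-controlled global dimension. -/
noncomputable def GDim (S : Set (ℝ≥0 → ℝ≥0)) (X : Type*) [MetricSpace X] : ℕ∞ :=
  sInf {k : ℕ∞ | ∃ n : ℕ, k = n ∧ GDimLE S X n}

/-- Large-scale truncation `Trunc^{**}(S̄)`. -/
def TruncInf (S : Set (ℝ≥0 → ℝ≥0)) : Set (ℝ≥0 → ℝ≥0) :=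
  {g | IsLSControl g ∧ ∃ f ∈ S, ∀ᶠ x in atTop, g x = f x}

/-- Small-scale truncation `Trunc_{**}(S̄)`. -/
def TruncZero (S : Set (ℝ≥0 → ℝ≥0)) : Set (ℝ≥0 → ℝ≥0) :=
  {g | IsSSControl g ∧ ∃ f ∈ S, ∀ᶠ x in 𝓝 (0 : ℝ≥0), g x = f x}

/-- The linked set `Link(ξ, S)`. -/
def Link (ξ S : Set (ℝ≥0 → ℝ≥0)) : Set (ℝ≥0 → ℝ≥0) :=
  {g | Continuous g ∧ Monotone g ∧
    ∃ g₁ ∈ ξ, ∃ g₂ ∈ S, (∀ᶠ x in 𝓝 (0 : ℝ≥0), g x = g₁ x) ∧ (∀ᶠ x in atTop, g x = g₂ x)}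

/-- The distance function of an explicitly given metric space structure. -/
def MDist {X : Type*} (m : MetricSpace X) (x y : X) : ℝ :=
  @dist X m.toPseudoMetricSpace.toDist x y

/-
Passing from `d` to `d''_1` changes nothing at scales `s ≥ 1`: separation by more than `s ≥ 1`
is the same for both metrics, and a `D`-bounded family for `d` is `max 1 D`-bounded for `d''_1`.
At scales `s < 1` the cover of `X` by singletons is `s`-disjoint for `d''_1`. A control function
for large scales therefore becomes a global one after precomposing it with `x ↦ c x`, where `c`
is large enough that `c ≥ s₀` and `f c ≥ 1`.
-/

def HasColoredCover (X : Type*) [MetricSpace X] (n : ℕ) (s D : ℝ≥0) : Prop :=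
  ∃ 𝒰 : Fin (n + 1) → Set (Set X),
    (⋃ i, ⋃₀ 𝒰 i) = univ ∧ ∀ i, SDisjoint s (𝒰 i) ∧ BoundedBy D (𝒰 i)

theorem ENat.sInf_setOf_coe_le_coe_iff {P : ℕ → Prop} (hP : Monotone P) (n : ℕ) :
    sInf {k : ℕ∞ | ∃ m : ℕ, k = m ∧ P m} ≤ n ↔ P n := by
  refine ⟨fun h => ?_, fun h => sInf_le ⟨n, rfl, h⟩⟩
  have hne : {k : ℕ∞ | ∃ m : ℕ, k = m ∧ P m}.Nonempty := by
    by_contra hempty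
    rw [not_nonempty_iff_eq_empty.mp hempty, sInf_empty] at h
    exact ENat.natCast_ne_top n (top_le_iff.mp h)
  obtain ⟨m, hm, hPm⟩ := csInf_mem hne
  rw [hm] at h
  exact hP (by exact_mod_cast h) hPm

section Covers

variable {X : Type*}

theorem boundedBy_iff [MetricSpace X] {D : ℝ≥0} {𝒰 : Set (Set X)} :
    BoundedBy D 𝒰 ↔ ∀ U ∈ 𝒰, ∀ x ∈ U, ∀ y ∈ U, dist x y ≤ D := by
  refine forall₂_congr fun U _ => Metric.ediam_le_iff.trans ?_
  simp only [edist_le_coe, ← NNReal.coe_le_coe, coe_nndist]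

theorem HasColoredCover.mono_dim [MetricSpace X] {k n : ℕ} {s D : ℝ≥0} (hkn : k ≤ n)
    (h : HasColoredCover X k s D) : HasColoredCover X n s D := by
  obtain ⟨𝒰, hcover, h𝒰⟩ := h
  let clamp : Fin (n + 1) → Fin (k + 1) := fun i => ⟨min i k, by omega⟩
  have hclamp : Function.Surjective clamp := fun j =>
    ⟨⟨j, by omega⟩, Fin.ext (min_eq_left (Nat.lt_succ_iff.mp j.isLt))⟩
  exact ⟨𝒰 ∘ clamp, (hclamp.iUnion_comp fun j => ⋃₀ 𝒰 j).trans hcover, fun i => h𝒰 _⟩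

theorem hasColoredCover_of_lt_dist [MetricSpace X] {n : ℕ} {s : ℝ≥0} (D : ℝ≥0)
    (h : ∀ x y : X, x ≠ y → (s : ℝ) < dist x y) : HasColoredCover X n s D := by
  refine ⟨fun _ => range singleton, ?_, fun _ => ⟨?_, ?_⟩⟩
  · exact eq_univ_of_forall fun x => mem_iUnion.mpr ⟨0, {x}, mem_range_self x, rfl⟩
  · rintro _ ⟨x, rfl⟩ _ ⟨y, rfl⟩ hxy _ hx _ hy
    rw [mem_singleton_iff] at hx hy
    subst hx hy
    exact h _ _ fun hxy' => hxy (hxy' ▸ rfl)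
  · rintro _ ⟨x, rfl⟩
    exact Metric.ediam_singleton.trans_le zero_le

theorem HasColoredCover.of_mdist {m₁ m₂ : MetricSpace X} {n : ℕ} {s s' D D' : ℝ≥0}
    (hsep : ∀ x y, (s : ℝ) < MDist m₁ x y → (s' : ℝ) < MDist m₂ x y)
    (hbdd : ∀ x y, MDist m₁ x y ≤ D → MDist m₂ x y ≤ D')
    (h : @HasColoredCover X m₁ n s D) : @HasColoredCover X m₂ n s' D' := by
  obtain ⟨𝒰, hcover, h𝒰⟩ := h
  refine ⟨𝒰, hcover, fun i => ⟨?_, ?_⟩⟩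
  · exact fun U hU V hV hUV x hx y hy => hsep x y ((h𝒰 i).1 U hU V hV hUV x hx y hy)
  · rw [@boundedBy_iff X m₂]
    exact fun U hU x hx y hy => hbdd x y ((@boundedBy_iff X m₁ _ _).mp (h𝒰 i).2 U hU x hx y hy)

end Covers

section TruncatedMetric

variable {X : Type*} {m m' : MetricSpace X} {c : ℝ}

theorem mdist_self (m : MetricSpace X) (x : X) : MDist m x x = 0 :=
  @dist_self X m.toPseudoMetricSpace x

theorem mdist_le_of_eq_max (h : ∀ x y : X, x ≠ y → MDist m' x y = max c (MDist m x y))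
    (x y : X) : MDist m x y ≤ MDist m' x y := by
  rcases eq_or_ne x y with rfl | hxy
  · rw [mdist_self, mdist_self]
  · exact (h x y hxy).symm ▸ le_max_right _ _

theorem mdist_le_max_of_eq_max (h : ∀ x y : X, x ≠ y → MDist m' x y = max c (MDist m x y))
    (x y : X) : MDist m' x y ≤ max c (MDist m x y) := by
  rcases eq_or_ne x y with rfl | hxy
  · rw [mdist_self, mdist_self]
    exact le_max_right c 0
  · exact (h x y hxy).le

end TruncatedMetric

theorem IsGlobalControlSemigroup.const_mul_mem {S : Set (ℝ≥0 → ℝ≥0)}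
    (hS : IsGlobalControlSemigroup S) {a : ℝ≥0} (ha : 1 ≤ a) : (a * ·) ∈ S := by
  have hle : ∀ x : ℝ≥0, x ≤ a * x := fun x => le_mul_of_one_le_left x.2 ha
  have hlin : ∀ᶠ x in ⊤, a * x = a * x + 0 := Eventually.of_forall fun x => (add_zero _).symm
  refine hS.2.1 _ ⟨continuous_const.mul continuous_id,
    fun x y hxy => mul_le_mul_of_nonneg_left hxy zero_le, mul_zero a, tendsto_atTop_mono hle tendsto_id, Eventually.of_forall hle,
    Eventually.of_forall hle⟩ ⟨a, 0, hlin.filter_mono le_top⟩ ⟨a, 0, hlin.filter_mono le_top⟩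

theorem GDim_le_iff {S : Set (ℝ≥0 → ℝ≥0)} {X : Type*} [MetricSpace X] {n : ℕ} :
    GDim S X ≤ n ↔ GDimLE S X n := by
  refine ENat.sInf_setOf_coe_le_coe_iff (fun k n hkn => ?_) n
  rintro ⟨f, hf, hcov⟩
  exact ⟨f, hf, fun s hs => HasColoredCover.mono_dim hkn (hcov s hs)⟩

/-- `M-dim_S̄ X ≤ n` iff there is `f ∈ S̄` such that for all sufficiently large `s`
there is a colored cover of `X` (in the original metric) by `n+1` families, each
`s`-disjoint and `f(s)`-bounded.  Here `M-dim_S̄ X` is the global dimension with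
respect to the metric `d''_1` (`d''_1(x,y) = max (1, d(x,y))` for `x ≠ y`). -/
theorem Mdim_le_iff_large_scale_covers (X : Type*) (m : MetricSpace X)
    (Sb : Set (ℝ≥0 → ℝ≥0)) (hSb : IsGlobalControlSemigroup Sb) (n : ℕ)
    (m'' : MetricSpace X)
    (h'' : ∀ x y : X, x ≠ y → MDist m'' x y = max 1 (MDist m x y)) :
    @GDim Sb X m'' ≤ (n : ℕ∞) ↔
      ∃ f ∈ Sb, ∃ s₀ : ℝ≥0, ∀ s : ℝ≥0, s₀ ≤ s →
        ∃ 𝒰 : Fin (n + 1) → Set (Set X),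
          (⋃ i, ⋃₀ 𝒰 i) = univ ∧
          ∀ i, @SDisjoint X m s (𝒰 i) ∧ @BoundedBy X m (f s) (𝒰 i) := by
  have hle := mdist_le_of_eq_max h''
  have hmax := mdist_le_max_of_eq_max h''
  rw [@GDim_le_iff Sb X m'' n]
  constructor
  · rintro ⟨f, hf, hcov⟩
    refine ⟨f, hf, 1, fun s hs => HasColoredCover.of_mdist (fun x y hxy => ?_)
      (fun x y hxy => (hle x y).trans hxy) (hcov s (one_pos.trans_le hs))⟩
    exact (lt_max_iff.mp (hxy.trans_le (hmax x y))).resolve_left (by exact_mod_cast hs.not_gt)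
  · rintro ⟨f, hf, s₀, hcov⟩
    obtain ⟨-, hmono, -, htendsto, -, -⟩ := hSb.1 f hf
    obtain ⟨c, hc, hfc1⟩ :=
      ((eventually_ge_atTop (max 1 s₀)).and (htendsto.eventually_ge_atTop 1)).exists
    have hc1 : 1 ≤ c := le_of_max_le_left hc
    refine ⟨f ∘ (c * ·), hSb.2.2 f hf _ (hSb.const_mul_mem hc1), fun s _ => ?_⟩
    rcases lt_or_ge s 1 with hs | hs
    · refine @hasColoredCover_of_lt_dist X m'' n s _ fun x y hxy => ?_
      exact (show (s : ℝ) < 1 by exact_mod_cast hs).trans_le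
        ((le_max_left _ _).trans (h'' x y hxy).ge)
    · have hcs : c ≤ c * s := le_mul_of_one_le_right c.2 hs
      have hsc : (s : ℝ) ≤ (c * s : ℝ≥0) := by exact_mod_cast le_mul_of_one_le_left s.2 hc1
      have hf1 : (1 : ℝ) ≤ f (c * s) := by exact_mod_cast hfc1.trans (hmono hcs)
      exact HasColoredCover.of_mdist (fun x y hxy => hsc.trans_lt (hxy.trans_le (hle x y)))
        (fun x y hxy => (hmax x y).trans (max_le hf1 hxy))
        (hcov (c * s) ((le_of_max_le_right hc).trans hcs))
end
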